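/- arXiv:2503.06969 — 8 statements merged into one kernel-verified Lean document; each statement's English description precedes it below -/
import Mathlib

section
/- The open-cover lifting category is homotopy invariant: if f, f' : X → Y are homotopic and ι, ι' : A → Y are homotopic, then liftcat^op_f(ι) = liftcat^op_{f'}(ι'). -/
open unitInterval

/-- Open-cover lifting category: least `n` such that `X` has an open cover by `n+1` open
sets on each of which `f` lifts through `ι` up to homotopy; `⊤` if no such cover exists. -/
noncomputable def liftcatOp {X Y A : Type*} [TopologicalSpace X] [TopologicalSpace Y]
    [TopologicalSpace A] (f : C(X, Y)) (ι : C(A, Y)) : ℕ∞ :=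
  sInf {N : ℕ∞ | ∃ n : ℕ, N = n ∧ ∃ U : Fin (n + 1) → Set X,
    (∀ i, IsOpen (U i)) ∧ (∀ x, ∃ i, x ∈ U i) ∧
    ∀ i, ∃ l : C(U i, A), (ι.comp l).Homotopic (f.restrict (U i))}

/-- Open-cover sectional category. -/
noncomputable def secatOp {X A : Type*} [TopologicalSpace X] [TopologicalSpace A]
    (ι : C(A, X)) : ℕ∞ :=
  liftcatOp (ContinuousMap.id X) ι

theorem ContinuousMap.Homotopic.restrict {X Y : Type*} [TopologicalSpace X]
    [TopologicalSpace Y] {f f' : C(X, Y)} (hf : f.Homotopic f') (s : Set X) :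
    (f.restrict s).Homotopic (f'.restrict s) :=
  hf.comp (.refl ⟨Subtype.val, continuous_subtype_val⟩)

theorem liftcatOp_le_of_homotopic {X Y A : Type*} [TopologicalSpace X] [TopologicalSpace Y]
    [TopologicalSpace A] {f f' : C(X, Y)} {ι ι' : C(A, Y)}
    (hf : f.Homotopic f') (hι : ι.Homotopic ι') :
    liftcatOp f' ι' ≤ liftcatOp f ι := by
  refine sInf_le_sInf ?_
  rintro _ ⟨n, rfl, U, hU, hcover, hlift⟩
  refine ⟨n, rfl, U, hU, hcover, fun i => ?_⟩
  obtain ⟨l, hl⟩ := hlift i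
  exact ⟨l, ((hι.symm.comp (.refl l)).trans hl).trans (hf.restrict (U i))⟩

theorem liftcatOp_homotopy_invariant {X Y A : Type*} [TopologicalSpace X] [TopologicalSpace Y]
    [TopologicalSpace A] (f f' : C(X, Y)) (ι ι' : C(A, Y))
    (hf : f.Homotopic f') (hι : ι.Homotopic ι') :
    liftcatOp f ι = liftcatOp f' ι' :=
  le_antisymm (liftcatOp_le_of_homotopic hf.symm hι.symm) (liftcatOp_le_of_homotopic hf hι)
end

section
/- The homotopic distance is invariant under homotopy: if f ≃ f' and g ≃ g' are homotopic maps X → Y, then D(f,g) = D(f',g'). -/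
/-- Homotopic distance: least `n` such that `X` has an open cover by `n+1` open sets on each
of which `f` and `g` restrict to homotopic maps; `⊤` if no such cover exists. -/
noncomputable def hDist {X Y : Type*} [TopologicalSpace X] [TopologicalSpace Y]
    (f g : C(X, Y)) : ℕ∞ :=
  sInf {N : ℕ∞ | ∃ n : ℕ, N = n ∧ ∃ U : Fin (n + 1) → Set X,
    (∀ i, IsOpen (U i)) ∧ (∀ x, ∃ i, x ∈ U i) ∧
    ∀ i, (f.restrict (U i)).Homotopic (g.restrict (U i))}

lemma restrict_homotopic {X Y : Type*} [TopologicalSpace X] [TopologicalSpace Y]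
    {f f' : C(X, Y)} (hf : f.Homotopic f') (U : Set X) :
    (f.restrict U).Homotopic (f'.restrict U) := by
  obtain ⟨F⟩ := hf
  exact ⟨F.compContinuousMap ⟨Subtype.val, continuous_subtype_val⟩⟩

theorem hDist_homotopy_invariant {X Y : Type*} [TopologicalSpace X] [TopologicalSpace Y]
    (f f' g g' : C(X, Y)) (hf : f.Homotopic f') (hg : g.Homotopic g') :
    hDist f g = hDist f' g' := by
  unfold hDist
  congr 1
  ext N
  constructor <;> rintro ⟨n, rfl, U, hop, hcov, hhom⟩ <;> refine ⟨n, rfl, U, hop, hcov, fun i => ?_⟩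
  · exact ((restrict_homotopic hf (U i)).symm.trans (hhom i)).trans (restrict_homotopic hg (U i))
  · exact ((restrict_homotopic hf (U i)).trans (hhom i)).trans (restrict_homotopic hg (U i)).symm
end

section
/- For continuous maps f, g : X → Y and h : X' → Y', D(f × h, g × h) = D(f, g), where f × h : X × X' → Y × Y' denotes the product map. -/
/-!
A cover `U_i` of `X` on whose pieces `f ≃ g` gives the cover `U_i × X'` for the product maps.
Conversely, given a cover `W_i` of `X × X'` for the product maps, pick `x₀ : X'`: restricting
the homotopies along the slice `x ↦ (x, x₀)` and projecting to `Y` shows `f ≃ g` on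
`{x | (x, x₀) ∈ W_i}`.
-/

namespace ContinuousMap

variable {X X' Y Y' Z : Type*} [TopologicalSpace X] [TopologicalSpace X']
  [TopologicalSpace Y] [TopologicalSpace Y'] [TopologicalSpace Z]

def HomotopicOn (f g : C(X, Y)) (U : Set X) : Prop :=
  (f.restrict U).Homotopic (g.restrict U)

def HasHomotopicCover (f g : C(X, Y)) (n : ℕ) : Prop :=
  ∃ U : Fin (n + 1) → Set X, (∀ i, IsOpen (U i)) ∧ (∀ x, ∃ i, x ∈ U i) ∧
    ∀ i, f.HomotopicOn g (U i)

namespace HomotopicOn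

variable {f g : C(X, Y)} {U : Set X}

theorem comp_left (hfg : f.HomotopicOn g U) (π : C(Y, Z)) :
    (π.comp f).HomotopicOn (π.comp g) U :=
  (Homotopic.refl π).comp hfg

theorem comp_right (hfg : f.HomotopicOn g U) (φ : C(Z, X)) :
    (f.comp φ).HomotopicOn (g.comp φ) (φ ⁻¹' U) :=
  hfg.comp (Homotopic.refl (φ.restrictPreimage U))

theorem prodMap (hfg : f.HomotopicOn g U) {h k : C(X', Y')} {V : Set X'}
    (hhk : h.HomotopicOn k V) : (f.prodMap h).HomotopicOn (g.prodMap k) (U ×ˢ V) :=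
  (Homotopic.prodMap hfg hhk).comp
    (Homotopic.refl (Homeomorph.Set.prod U V : C(↥(U ×ˢ V), U × V)))

end HomotopicOn

theorem HasHomotopicCover.prodMap {f g : C(X, Y)} {n : ℕ} (hfg : f.HasHomotopicCover g n)
    (h : C(X', Y')) : (f.prodMap h).HasHomotopicCover (g.prodMap h) n := by
  obtain ⟨U, hopen, hcover, hhom⟩ := hfg
  refine ⟨fun i => U i ×ˢ Set.univ, fun i => (hopen i).prod isOpen_univ, fun z => ?_,
    fun i => (hhom i).prodMap (Homotopic.refl (h.restrict _))⟩
  obtain ⟨i, hi⟩ := hcover z.1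
  exact ⟨i, hi, trivial⟩

theorem HasHomotopicCover.of_prodMap [Nonempty X'] {f g : C(X, Y)} {h : C(X', Y')} {n : ℕ}
    (hfg : (f.prodMap h).HasHomotopicCover (g.prodMap h) n) : f.HasHomotopicCover g n := by
  obtain ⟨W, hopen, hcover, hhom⟩ := hfg
  obtain ⟨x₀⟩ := ‹Nonempty X'›
  let slice : C(X, X × X') := (ContinuousMap.id X).prodMk (const X x₀)
  have hf : (fst.comp (f.prodMap h)).comp slice = f := rfl
  have hg : (fst.comp (g.prodMap h)).comp slice = g := rfl
  refine ⟨fun i => slice ⁻¹' W i, fun i => (hopen i).preimage slice.continuous,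
    fun x => hcover (x, x₀), fun i => ?_⟩
  simpa only [hf, hg] using ((hhom i).comp_left fst).comp_right slice

end ContinuousMap

theorem hDist_eq_sInf_hasHomotopicCover {X Y : Type*} [TopologicalSpace X] [TopologicalSpace Y]
    (f g : C(X, Y)) :
    hDist f g = sInf {N : ℕ∞ | ∃ n : ℕ, N = n ∧ f.HasHomotopicCover g n} :=
  rfl

theorem hDist_prodMap {X X' Y Y' : Type*} [TopologicalSpace X] [TopologicalSpace X']
    [TopologicalSpace Y] [TopologicalSpace Y'] [Nonempty X']
    (f g : C(X, Y)) (h : C(X', Y')) :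
    hDist (f.prodMap h) (g.prodMap h) = hDist f g := by
  simp only [hDist_eq_sInf_hasHomotopicCover]
  congr 1
  ext N
  exact exists_congr fun n => and_congr_right fun _ =>
    ⟨ContinuousMap.HasHomotopicCover.of_prodMap, fun hfg => hfg.prodMap h⟩
end

section
/- Triangle inequality for homotopic distance: if X is a normal topological space and f, g, h : X → Y are continuous, then D(f,h) ≤ D(f,g) + D(g,h). -/
/-!
Take partitions of unity `a` subordinate to a cover `U` on which `f ≃ g`, and `b` subordinate to a
cover `V` on which `g ≃ h`. The open set where `a i, b j > 0` and `a i + b j` strictly exceeds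
every other `a k + b l` with `k + l = i + j` lies in `U i ∩ V j`, so `f ≃ h` on it. For fixed
`i + j` these sets are pairwise disjoint, so the homotopies glue; and each point `x` lies in one
of them, namely for `i`, `j` the last maximisers of `a · x` and `b · x`. This gives a cover
indexed by the `n + m + 1` antidiagonals.
-/

open Function Set Topology unitInterval

theorem Finite.exists_greatest_argmax {ι β : Type*} [Finite ι] [Nonempty ι] [LinearOrder ι]
    [LinearOrder β] (a : ι → β) : ∃ i, (∀ k, a k ≤ a i) ∧ ∀ k, i < k → a k < a i := by
  obtain ⟨i, hi⟩ := Finite.exists_max fun k => toLex (a k, k)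
  refine ⟨i, fun k => ?_, fun k hik => ?_⟩
  · rcases Prod.Lex.le_iff.1 (hi k) with h | ⟨h, -⟩ <;> exact h.le
  · rcases Prod.Lex.le_iff.1 (hi k) with h | ⟨-, h⟩
    · exact h
    · exact absurd hik h.not_gt

theorem exists_pos_and_sum_lt_on_antidiagonal {α : Type*} [AddCommMonoid α] [LinearOrder α]
    [IsOrderedCancelAddMonoid α] {n m : ℕ} (a : Fin (n + 1) → α) (b : Fin (m + 1) → α)
    (ha : ∃ i, 0 < a i) (hb : ∃ j, 0 < b j) :
    ∃ p : Fin (n + 1) × Fin (m + 1), 0 < a p.1 ∧ 0 < b p.2 ∧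
      ∀ q ≠ p, (q.1 : ℕ) + q.2 = p.1 + p.2 → a q.1 + b q.2 < a p.1 + b p.2 := by
  obtain ⟨i, hai, hai'⟩ := Finite.exists_greatest_argmax a
  obtain ⟨j, hbj, hbj'⟩ := Finite.exists_greatest_argmax b
  obtain ⟨i₀, hi₀⟩ := ha
  obtain ⟨j₀, hj₀⟩ := hb
  refine ⟨(i, j), hi₀.trans_le (hai i₀), hj₀.trans_le (hbj j₀), fun ⟨k, l⟩ hkl hsum => ?_⟩
  have : i < k ∨ j < l := by
    by_contra! h
    dsimp only at hsum
    simp only [Fin.le_def] at h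
    exact hkl (by simp only [Prod.mk.injEq, Fin.ext_iff]; omega)
  rcases this with h | h
  · exact add_lt_add_of_lt_of_le (hai' _ h) (hbj _)
  · exact add_lt_add_of_le_of_lt (hai _) (hbj' _ h)

section

variable {X Y : Type*} [TopologicalSpace X] [TopologicalSpace Y]

def IsHomotopicCover {ι : Type*} (f g : C(X, Y)) (U : ι → Set X) : Prop :=
  (∀ i, IsOpen (U i)) ∧ (∀ x, ∃ i, x ∈ U i) ∧
    ∀ i, (f.restrict (U i)).Homotopic (g.restrict (U i))

theorem hDist_le_of_isHomotopicCover {f g : C(X, Y)} {n : ℕ} {U : Fin (n + 1) → Set X}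
    (hU : IsHomotopicCover f g U) : hDist f g ≤ n :=
  sInf_le ⟨n, rfl, U, hU⟩

theorem exists_isHomotopicCover_of_hDist_ne_top {f g : C(X, Y)} (hfg : hDist f g ≠ ⊤) :
    ∃ (n : ℕ) (U : Fin (n + 1) → Set X), hDist f g = n ∧ IsHomotopicCover f g U := by
  have hne : {N : ℕ∞ | ∃ n : ℕ, N = n ∧ ∃ U : Fin (n + 1) → Set X,
      IsHomotopicCover f g U}.Nonempty := by
    rw [nonempty_iff_ne_empty]
    rintro hempty
    exact hfg (by rw [hDist]; exact hempty ▸ sInf_empty)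
  obtain ⟨n, hn, U, hU⟩ := csInf_mem hne
  exact ⟨n, U, hn, hU⟩

theorem ContinuousMap.Homotopic.restrict_mono {f g : C(X, Y)} {A B : Set X} (hAB : A ⊆ B)
    (hfg : (f.restrict B).Homotopic (g.restrict B)) :
    (f.restrict A).Homotopic (g.restrict A) :=
  hfg.comp (.refl ⟨inclusion hAB, continuous_inclusion hAB⟩)

theorem ContinuousMap.Homotopic.restrict_iUnion {ι : Type*} {f g : C(X, Y)} {W : ι → Set X}
    (hW : ∀ i, IsOpen (W i)) (hdisj : Pairwise (Disjoint on W))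
    (hfg : ∀ i, (f.restrict (W i)).Homotopic (g.restrict (W i))) :
    (f.restrict (⋃ i, W i)).Homotopic (g.restrict (⋃ i, W i)) := by
  have H := fun i => (hfg i).some
  let S : ι → Set (I × ⋃ i, W i) := fun i => {p | p.2.1 ∈ W i}
  let φ : ∀ i, C(S i, Y) := fun i =>
    (H i).toContinuousMap.comp ⟨fun p => (p.1.1, ⟨p.1.2, p.2⟩), by fun_prop⟩
  have hφ : ∀ i j p (hi : p ∈ S i) (hj : p ∈ S j), φ i ⟨p, hi⟩ = φ j ⟨p, hj⟩ := by
    intro i j p hi hj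
    obtain rfl : i = j := hdisj.eq (not_disjoint_iff.2 ⟨_, hi, hj⟩)
    rfl
  have hS : ∀ p : I × ⋃ i, W i, ∃ i, S i ∈ 𝓝 p := fun p =>
    have ⟨i, hi⟩ := mem_iUnion.1 p.2.2
    ⟨i, ((hW i).preimage (by fun_prop)).mem_nhds hi⟩
  refine ⟨⟨ContinuousMap.liftCover S φ hφ hS, fun x => ?_, fun x => ?_⟩⟩
  all_goals
    obtain ⟨i, hi⟩ := mem_iUnion.1 x.2
  · exact (ContinuousMap.liftCover_coe (i := i) ⟨(0, x), hi⟩).trans ((H i).apply_zero ⟨x, hi⟩)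
  · exact (ContinuousMap.liftCover_coe (i := i) ⟨(1, x), hi⟩).trans ((H i).apply_one ⟨x, hi⟩)

theorem IsHomotopicCover.trans [NormalSpace X] {f g h : C(X, Y)} {n m : ℕ}
    {U : Fin (n + 1) → Set X} {V : Fin (m + 1) → Set X}
    (hU : IsHomotopicCover f g U) (hV : IsHomotopicCover g h V) :
    ∃ W : Fin (n + m + 1) → Set X, IsHomotopicCover f h W := by
  obtain ⟨a, ha⟩ := PartitionOfUnity.exists_isSubordinate_of_locallyFinite isClosed_univ U hU.1
    (locallyFinite_of_finite _) fun x _ => mem_iUnion.2 (hU.2.1 x)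
  obtain ⟨b, hb⟩ := PartitionOfUnity.exists_isSubordinate_of_locallyFinite isClosed_univ V hV.1
    (locallyFinite_of_finite _) fun x _ => mem_iUnion.2 (hV.2.1 x)
  let P (p : Fin (n + 1) × Fin (m + 1)) : Set X := {x | 0 < a p.1 x ∧ 0 < b p.2 x ∧
    ∀ q ≠ p, (q.1 : ℕ) + q.2 = p.1 + p.2 → a q.1 x + b q.2 x < a p.1 x + b p.2 x}
  have hPo (p) : IsOpen (P p) := by
    simp only [P, ofPred_and, ofPred_forall]
    exact (isOpen_lt continuous_const (by fun_prop)).inter ((isOpen_lt continuous_const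
      (by fun_prop)).inter (isOpen_iInter_of_finite fun q => isOpen_iInter_of_finite fun _ =>
        isOpen_iInter_of_finite fun _ => isOpen_lt (by fun_prop) (by fun_prop)))
  have hPh (p) : (f.restrict (P p)).Homotopic (h.restrict (P p)) :=
    ((hU.2.2 p.1).restrict_mono fun x hx => ha p.1 (subset_tsupport _ hx.1.ne')).trans
      ((hV.2.2 p.2).restrict_mono fun x hx => hb p.2 (subset_tsupport _ hx.2.1.ne'))
  have hPcov (x) : ∃ p, x ∈ P p := exists_pos_and_sum_lt_on_antidiagonal (a · x) (b · x)
    (a.exists_pos (mem_univ x)) (b.exists_pos (mem_univ x))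
  have hPdisj (p q) (hpq : p ≠ q) (hsum : (p.1 : ℕ) + p.2 = q.1 + q.2) : Disjoint (P p) (P q) :=
    disjoint_left.2 fun x hp hq => (hp.2.2 q hpq.symm hsum.symm).not_gt (hq.2.2 p hpq hsum)
  refine ⟨fun k => ⋃ p : {p : Fin (n + 1) × Fin (m + 1) // (p.1 : ℕ) + p.2 = k}, P p,
    fun k => isOpen_iUnion fun p => hPo p, fun x => ?_,
    fun k => .restrict_iUnion (fun p => hPo p) ?_ fun p => hPh p⟩
  · obtain ⟨p, hp⟩ := hPcov x
    exact ⟨⟨p.1 + p.2, by omega⟩, mem_iUnion.2 ⟨⟨p, rfl⟩, hp⟩⟩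
  · rintro ⟨p, hp⟩ ⟨q, hq⟩ hpq
    exact hPdisj p q (fun h => hpq (Subtype.ext h)) (hp.trans hq.symm)

end

theorem hDist_triangle {X Y : Type*} [TopologicalSpace X] [TopologicalSpace Y] [NormalSpace X]
    (f g h : C(X, Y)) : hDist f h ≤ hDist f g + hDist g h := by
  rcases eq_or_ne (hDist f g) ⊤ with hfg | hfg
  · simp [hfg]
  rcases eq_or_ne (hDist g h) ⊤ with hgh | hgh
  · simp [hgh]
  obtain ⟨n, U, hn, hU⟩ := exists_isHomotopicCover_of_hDist_ne_top hfg
  obtain ⟨m, V, hm, hV⟩ := exists_isHomotopicCover_of_hDist_ne_top hgh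
  obtain ⟨W, hW⟩ := hU.trans hV
  calc hDist f h ≤ (n + m : ℕ) := hDist_le_of_isHomotopicCover hW
    _ = hDist f g + hDist g h := by rw [hn, hm, Nat.cast_add]
end

section
/- For maps f, g : X → Y and f', g' : X' → Y' with X × X' normal and X, X' nonempty, D(f × f', g × g') ≤ D(f, g) + D(f', g'). -/
open Set ContinuousMap

/-- Glue homotopies over pairwise disjoint open sets. -/
lemma glue_homotopic {Z W : Type*} [TopologicalSpace Z] [TopologicalSpace W]
    (F G : C(Z, W)) {ι : Type*} (O : ι → Set Z) (ho : ∀ i, IsOpen (O i))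
    (hd : ∀ i j, i ≠ j → ∀ z, z ∈ O i → z ∈ O j → False)
    (hh : ∀ i, (F.restrict (O i)).Homotopic (G.restrict (O i))) :
    (F.restrict (⋃ i, O i)).Homotopic (G.restrict (⋃ i, O i)) := by
  classical
  let H := fun i => (hh i).some
  set T : Set Z := ⋃ i, O i with hT
  let S : ι → Set (unitInterval × T) := fun i => (fun q : unitInterval × T => (q.2 : Z)) ⁻¹' O i
  have hcont : Continuous (fun q : unitInterval × T => (q.2 : Z)) :=
    continuous_subtype_val.comp continuous_snd
  let φ : ∀ i, C(S i, W) := fun i =>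
    (H i).toContinuousMap.comp
      ⟨fun q => (q.val.1, ⟨(q.val.2 : Z), q.2⟩),
       ((continuous_fst.comp continuous_subtype_val).prodMk
        ((hcont.comp continuous_subtype_val).subtype_mk _))⟩
  have hφ : ∀ i j (x : unitInterval × T) (hxi : x ∈ S i) (hxj : x ∈ S j),
      φ i ⟨x, hxi⟩ = φ j ⟨x, hxj⟩ := by
    intro i j x hxi hxj
    rcases eq_or_ne i j with rfl | hne
    · rfl
    · exact (hd i j hne _ hxi hxj).elim
  have hS : ∀ q : unitInterval × T, ∃ i, S i ∈ nhds q := by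
    intro q
    obtain ⟨i, hi⟩ := Set.mem_iUnion.1 q.2.2
    exact ⟨i, ((ho i).preimage hcont).mem_nhds hi⟩
  let h : C(unitInterval × T, W) := ContinuousMap.liftCover S φ hφ hS
  refine ⟨{ toContinuousMap := h, map_zero_left := ?_, map_one_left := ?_ }⟩
  · intro x
    obtain ⟨i, hi⟩ := Set.mem_iUnion.1 x.2
    have hmem : ((0 : unitInterval), x) ∈ S i := hi
    show h ((0 : unitInterval), x) = F.restrict T x
    rw [show h ((0 : unitInterval), x) = φ i ⟨_, hmem⟩ from
      ContinuousMap.liftCover_coe (⟨((0 : unitInterval), x), hmem⟩ : S i)]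
    exact (H i).apply_zero _
  · intro x
    obtain ⟨i, hi⟩ := Set.mem_iUnion.1 x.2
    have hmem : ((1 : unitInterval), x) ∈ S i := hi
    show h ((1 : unitInterval), x) = G.restrict T x
    rw [show h ((1 : unitInterval), x) = φ i ⟨_, hmem⟩ from
      ContinuousMap.liftCover_coe (⟨((1 : unitInterval), x), hmem⟩ : S i)]
    exact (H i).apply_one _

/-- Product of restricted homotopies. -/
lemma prod_restrict_homotopic {X X' Y Y' : Type*} [TopologicalSpace X] [TopologicalSpace X']
    [TopologicalSpace Y] [TopologicalSpace Y'] (f g : C(X, Y)) (f' g' : C(X', Y'))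
    {A : Set X} {B : Set X'} {O : Set (X × X')} (hO : O ⊆ A ×ˢ B)
    (h : (f.restrict A).Homotopic (g.restrict A))
    (h' : (f'.restrict B).Homotopic (g'.restrict B)) :
    ((f.prodMap f').restrict O).Homotopic ((g.prodMap g').restrict O) := by
  obtain ⟨H⟩ := h
  obtain ⟨H'⟩ := h'
  refine ⟨⟨⟨fun p =>
      (H (p.1, ⟨(p.2 : X × X').1, (hO p.2.2).1⟩),
       H' (p.1, ⟨(p.2 : X × X').2, (hO p.2.2).2⟩)), ?_⟩, ?_, ?_⟩⟩
  · apply Continuous.prodMk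
    · exact H.continuous.comp (continuous_fst.prodMk
        (((continuous_fst.comp continuous_subtype_val).comp continuous_snd).subtype_mk _))
    · exact H'.continuous.comp (continuous_fst.prodMk
        (((continuous_snd.comp continuous_subtype_val).comp continuous_snd).subtype_mk _))
  · intro x
    dsimp only
    rw [H.apply_zero, H'.apply_zero]
    rfl
  · intro x
    dsimp only
    rw [H.apply_one, H'.apply_one]
    rfl

lemma key_cover {X X' Y Y' : Type*} [TopologicalSpace X] [TopologicalSpace X']
    [TopologicalSpace Y] [TopologicalSpace Y'] [NormalSpace (X × X')]
    (f g : C(X, Y)) (f' g' : C(X', Y')) {n m : ℕ}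
    (U : Fin (n + 1) → Set X) (hUo : ∀ i, IsOpen (U i)) (hUc : ∀ x, ∃ i, x ∈ U i)
    (hUh : ∀ i, (f.restrict (U i)).Homotopic (g.restrict (U i)))
    (V : Fin (m + 1) → Set X') (hVo : ∀ j, IsOpen (V j)) (hVc : ∀ x, ∃ j, x ∈ V j)
    (hVh : ∀ j, (f'.restrict (V j)).Homotopic (g'.restrict (V j))) :
    ∃ W : Fin (n + m + 1) → Set (X × X'), (∀ k, IsOpen (W k)) ∧ (∀ z, ∃ k, z ∈ W k) ∧
      ∀ k, ((f.prodMap f').restrict (W k)).Homotopic ((g.prodMap g').restrict (W k)) := by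
  classical
  -- thickened covers on X × X'
  have hUo' : ∀ i, IsOpen ((U i) ×ˢ (univ : Set X')) := fun i => (hUo i).prod isOpen_univ
  have hVo' : ∀ j, IsOpen ((univ : Set X) ×ˢ (V j)) := fun j => isOpen_univ.prod (hVo j)
  have hUc' : ⋃ i, (U i) ×ˢ (univ : Set X') = univ := by
    apply Set.iUnion_eq_univ_iff.2
    intro z
    obtain ⟨i, hi⟩ := hUc z.1
    exact ⟨i, hi, mem_univ _⟩
  have hVc' : ⋃ j, (univ : Set X) ×ˢ (V j) = univ := by
    apply Set.iUnion_eq_univ_iff.2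
    intro z
    obtain ⟨j, hj⟩ := hVc z.2
    exact ⟨j, mem_univ _, hj⟩
  -- shrink the covers
  obtain ⟨t, htU, hto, htc⟩ :=
    exists_iUnion_eq_closure_subset hUo' (fun z => Set.toFinite _) hUc'
  obtain ⟨t', htV, hto', htc'⟩ :=
    exists_iUnion_eq_closure_subset hVo' (fun z => Set.toFinite _) hVc'
  -- Urysohn functions
  choose u hu0 hu1 hu01 using fun i => exists_continuous_zero_one_of_isClosed
    (isClosed_compl_iff.2 (hUo' i)) isClosed_closure
    (disjoint_compl_left.mono_right (htc i))
  choose v hv0 hv1 hv01 using fun j => exists_continuous_zero_one_of_isClosed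
    (isClosed_compl_iff.2 (hVo' j)) isClosed_closure
    (disjoint_compl_left.mono_right (htc' j))
  have humem : ∀ i (z : X × X'), u i z ≠ 0 → z.1 ∈ U i := by
    intro i z h
    by_contra hz
    exact h (hu0 i (by simp [Set.mem_prod, hz]))
  have hvmem : ∀ j (z : X × X'), v j z ≠ 0 → z.2 ∈ V j := by
    intro j z h
    by_contra hz
    exact h (hv0 j (by simp [Set.mem_prod, hz]))
  have huone : ∀ z : X × X', ∃ i, u i z = 1 := by
    intro z
    have hz : z ∈ ⋃ i, t i := htU ▸ mem_univ z
    obtain ⟨i, hi⟩ := mem_iUnion.1 hz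
    exact ⟨i, hu1 i (subset_closure hi)⟩
  have hvone : ∀ z : X × X', ∃ j, v j z = 1 := by
    intro z
    have hz : z ∈ ⋃ j, t' j := htV ▸ mem_univ z
    obtain ⟨j, hj⟩ := mem_iUnion.1 hz
    exact ⟨j, hv1 j (subset_closure hj)⟩
  have hunn : ∀ i (z : X × X'), 0 ≤ u i z := fun i z => (hu01 i z).1
  have hvnn : ∀ j (z : X × X'), 0 ≤ v j z := fun j z => (hv01 j z).1
  -- the weight functions and the basic open sets
  set w : (Fin (n + 1) × Fin (m + 1)) → (X × X') → ℝ :=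
    fun p z => u p.1 z * v p.2 z with hw
  set Ω : (Fin (n + 1) × Fin (m + 1)) → Set (X × X') := fun p =>
    {z | 0 < w p z} ∩ ⋂ (q : Fin (n + 1) × Fin (m + 1))
      (_ : (q.1 : ℕ) + (q.2 : ℕ) = (p.1 : ℕ) + (p.2 : ℕ) ∧ q ≠ p), {z | w q z < w p z}
    with hΩ
  have hΩmem : ∀ p (z : X × X'), z ∈ Ω p ↔ 0 < w p z ∧
      ∀ q, (q.1 : ℕ) + (q.2 : ℕ) = (p.1 : ℕ) + (p.2 : ℕ) → q ≠ p → w q z < w p z := by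
    intro p z
    simp only [hΩ, Set.mem_inter_iff, Set.mem_setOf_eq, Set.mem_iInter, and_imp]
  have hΩo : ∀ p, IsOpen (Ω p) := by
    intro p
    apply IsOpen.inter
    · exact isOpen_lt continuous_const ((u p.1).continuous.mul (v p.2).continuous)
    · exact isOpen_iInter_of_finite fun q => isOpen_iInter_of_finite fun _ =>
        isOpen_lt ((u q.1).continuous.mul (v q.2).continuous)
          ((u p.1).continuous.mul (v p.2).continuous)
  have hΩsub : ∀ p, Ω p ⊆ (U p.1) ×ˢ (V p.2) := by
    intro p z hz
    have hpos := ((hΩmem p z).1 hz).1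
    refine ⟨humem p.1 z fun h => ?_, hvmem p.2 z fun h => ?_⟩
    · rw [hw] at hpos; simp only [h, zero_mul] at hpos; exact lt_irrefl _ hpos
    · rw [hw] at hpos; simp only [h, mul_zero] at hpos; exact lt_irrefl _ hpos
  have hΩdis : ∀ p q, (p.1 : ℕ) + (p.2 : ℕ) = (q.1 : ℕ) + (q.2 : ℕ) → p ≠ q →
      ∀ z, z ∈ Ω p → z ∈ Ω q → False := by
    intro p q hlev hne z hp hq
    have h1 := ((hΩmem p z).1 hp).2 q hlev.symm (Ne.symm hne)
    have h2 := ((hΩmem q z).1 hq).2 p hlev hne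
    exact absurd (h1.trans h2) (lt_irrefl _)
  have hΩcov : ∀ z : X × X', ∃ p, z ∈ Ω p := by
    intro z
    obtain ⟨i1, hi1⟩ := huone z
    obtain ⟨j1, hj1⟩ := hvone z
    set s : Finset (Fin (n + 1)) := Finset.univ.filter (fun i => 0 < u i z) with hs
    set s' : Finset (Fin (m + 1)) := Finset.univ.filter (fun j => 0 < v j z) with hs'
    have hsne : s.Nonempty := ⟨i1, by simp [hs, hi1]⟩
    have hsne' : s'.Nonempty := ⟨j1, by simp [hs', hj1]⟩
    set i0 := s.max' hsne with hi0
    set j0 := s'.max' hsne' with hj0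
    have hupos : 0 < u i0 z := by
      have := s.max'_mem hsne
      simp only [hs, Finset.mem_filter] at this
      exact this.2
    have hvpos : 0 < v j0 z := by
      have := s'.max'_mem hsne'
      simp only [hs', Finset.mem_filter] at this
      exact this.2
    have huzero : ∀ i : Fin (n + 1), (i0 : ℕ) < (i : ℕ) → u i z = 0 := by
      intro i hi
      by_contra h
      have hpos : 0 < u i z := lt_of_le_of_ne (hunn i z) (Ne.symm h)
      have hmem : i ∈ s := by simp [hs, hpos]
      have hle := s.le_max' i hmem
      rw [Fin.le_def] at hle
      omega
    have hvzero : ∀ j : Fin (m + 1), (j0 : ℕ) < (j : ℕ) → v j z = 0 := by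
      intro j hj
      by_contra h
      have hpos : 0 < v j z := lt_of_le_of_ne (hvnn j z) (Ne.symm h)
      have hmem : j ∈ s' := by simp [hs', hpos]
      have hle := s'.le_max' j hmem
      rw [Fin.le_def] at hle
      omega
    refine ⟨(i0, j0), (hΩmem (i0, j0) z).2 ⟨mul_pos hupos hvpos, ?_⟩⟩
    intro q hlev hne
    have hlev' : (q.1 : ℕ) + (q.2 : ℕ) = (i0 : ℕ) + (j0 : ℕ) := hlev
    rcases lt_trichotomy ((q.1 : ℕ)) ((i0 : ℕ)) with hlt | heq | hgt
    · have h2 : (j0 : ℕ) < (q.2 : ℕ) := by omega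
      have hz0 : w q z = 0 := by rw [hw]; simp [hvzero q.2 h2]
      rw [hz0]
      exact mul_pos hupos hvpos
    · have h2 : (q.2 : ℕ) = (j0 : ℕ) := by omega
      exact absurd (Prod.ext (Fin.ext heq) (Fin.ext h2)) hne
    · have hz0 : w q z = 0 := by rw [hw]; simp [huzero q.1 hgt]
      rw [hz0]
      exact mul_pos hupos hvpos
  -- the final cover
  refine ⟨fun k => ⋃ p : {p : Fin (n + 1) × Fin (m + 1) //
      (p.1 : ℕ) + (p.2 : ℕ) = (k : ℕ)}, Ω p.val, ?_, ?_, ?_⟩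
  · exact fun k => isOpen_iUnion fun p => hΩo p.val
  · intro z
    obtain ⟨p, hp⟩ := hΩcov z
    have hk : (p.1 : ℕ) + (p.2 : ℕ) < n + m + 1 := by
      have h1 : (p.1 : ℕ) < n + 1 := p.1.isLt
      have h2 : (p.2 : ℕ) < m + 1 := p.2.isLt
      omega
    exact ⟨⟨(p.1 : ℕ) + (p.2 : ℕ), hk⟩, mem_iUnion.2 ⟨⟨p, rfl⟩, hp⟩⟩
  · intro k
    apply glue_homotopic
    · exact fun p => hΩo p.val
    · intro p q hne z hzp hzq
      exact hΩdis p.val q.val (p.2.trans q.2.symm)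
        (fun h => hne (Subtype.ext h)) z hzp hzq
    · intro p
      exact prod_restrict_homotopic f g f' g' (hΩsub p.val) (hUh p.val.1) (hVh p.val.2)

theorem hDist_prod_le {X X' Y Y' : Type*} [TopologicalSpace X] [TopologicalSpace X']
    [TopologicalSpace Y] [TopologicalSpace Y'] [NormalSpace (X × X')]
    [Nonempty X] [Nonempty X'] (f g : C(X, Y)) (f' g' : C(X', Y')) :
    hDist (f.prodMap f') (g.prodMap g') ≤ hDist f g + hDist f' g' := by
  rcases eq_or_ne (hDist f g) ⊤ with h1 | h1
  · rw [h1, top_add]; exact le_top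
  rcases eq_or_ne (hDist f' g') ⊤ with h2 | h2
  · rw [h2, add_top]; exact le_top
  have hne1 : {N : ℕ∞ | ∃ n : ℕ, N = n ∧ ∃ U : Fin (n + 1) → Set X,
      (∀ i, IsOpen (U i)) ∧ (∀ x, ∃ i, x ∈ U i) ∧
      ∀ i, (f.restrict (U i)).Homotopic (g.restrict (U i))}.Nonempty := by
    rw [Set.nonempty_iff_ne_empty]
    intro h
    exact h1 (by unfold hDist; rw [h, sInf_empty])
  have hne2 : {N : ℕ∞ | ∃ n : ℕ, N = n ∧ ∃ V : Fin (n + 1) → Set X',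
      (∀ j, IsOpen (V j)) ∧ (∀ x, ∃ j, x ∈ V j) ∧
      ∀ j, (f'.restrict (V j)).Homotopic (g'.restrict (V j))}.Nonempty := by
    rw [Set.nonempty_iff_ne_empty]
    intro h
    exact h2 (by unfold hDist; rw [h, sInf_empty])
  obtain ⟨n, hn, U, hUo, hUc, hUh⟩ := csInf_mem hne1
  obtain ⟨m, hm, V, hVo, hVc, hVh⟩ := csInf_mem hne2
  obtain ⟨W, hWo, hWc, hWh⟩ := key_cover f g f' g' U hUo hUc hUh V hVo hVc hVh
  have hle : hDist (f.prodMap f') (g.prodMap g') ≤ ((n + m : ℕ) : ℕ∞) :=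
    sInf_le ⟨n + m, rfl, W, hWo, hWc, hWh⟩
  rw [show hDist f g = (n : ℕ∞) from hn, show hDist f' g' = (m : ℕ∞) from hm, ← Nat.cast_add]
  exact hle
end

section
/- For a path-connected topological space X and a constant map n_X : X → X, the homotopic distance D(id_X, n_X) equals the Lusternik–Schnirelmann category cat(X). -/
/-- Lusternik–Schnirelmann category: least `n` such that `X` has an open cover by `n+1` open
sets each of whose inclusions into `X` is nullhomotopic; `⊤` if no such cover exists. -/
noncomputable def catLS (X : Type*) [TopologicalSpace X] : ℕ∞ :=
  sInf {N : ℕ∞ | ∃ n : ℕ, N = n ∧ ∃ U : Fin (n + 1) → Set X,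
    (∀ i, IsOpen (U i)) ∧ (∀ x, ∃ i, x ∈ U i) ∧
    ∀ i, ∃ x₀ : X, ((ContinuousMap.id X).restrict (U i)).Homotopic (ContinuousMap.const _ x₀)}


lemma const_homotopic_of_path {Z X : Type*} [TopologicalSpace Z] [TopologicalSpace X]
    {a b : X} (γ : Path a b) :
    (ContinuousMap.const Z a).Homotopic (ContinuousMap.const Z b) :=
  ⟨{ toFun := fun p => γ p.1
     continuous_toFun := γ.continuous.comp continuous_fst
     map_zero_left := fun _ => by simp
     map_one_left := fun _ => by simp }⟩

theorem hDist_id_const_eq_catLS {X : Type*} [TopologicalSpace X] [PathConnectedSpace X]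
    (x₀ : X) : hDist (ContinuousMap.id X) (ContinuousMap.const X x₀) = catLS X := by
  unfold hDist catLS
  congr 1
  ext N
  constructor
  · rintro ⟨n, rfl, U, hO, hC, hH⟩
    exact ⟨n, rfl, U, hO, hC, fun i => ⟨x₀, hH i⟩⟩
  · rintro ⟨n, rfl, U, hO, hC, hH⟩
    refine ⟨n, rfl, U, hO, hC, fun i => ?_⟩
    obtain ⟨x, hx⟩ := hH i
    exact hx.trans (const_homotopic_of_path (PathConnectedSpace.somePath x x₀))
end

section
/- The topological complexity of Y equals the homotopic distance between the two projections: TC(Y) = D(pr₁, pr₂), where pr₁, pr₂ : Y × Y → Y. -/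
open unitInterval

/-- Topological complexity: the sectional category of the free path fibration
`π : Y^I → Y × Y`, `π γ = (γ 0, γ 1)`. -/
noncomputable def TCop (Y : Type*) [TopologicalSpace Y] : ℕ∞ :=
  secatOp (X := Y × Y)
    ⟨fun γ : C(I, Y) => (γ 0, γ 1),
      (ContinuousEvalConst.continuous_eval_const 0).prodMk
        (ContinuousEvalConst.continuous_eval_const 1)⟩

/-! A homotopy `X × I → Y` is the same thing as a continuous family of paths `X → Y^I`
(curry along the locally compact `I`). Hence a map `p : X → Y × Y` lifts through `π` up to
homotopy exactly when its two coordinates are homotopic, and `TC(Y)` and `D(pr₁, pr₂)` are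
infima over the same covers. -/

section

variable {X Y Z A : Type*} [TopologicalSpace X] [TopologicalSpace Y] [TopologicalSpace Z]
  [TopologicalSpace A]

theorem liftcatOp_eq_hDist_of_forall_isOpen {f : C(X, Y)} {ι : C(A, Y)} {g h : C(X, Z)}
    (hfg : ∀ U : Set X, IsOpen U →
      ((∃ l : C(U, A), (ι.comp l).Homotopic (f.restrict U)) ↔
        (g.restrict U).Homotopic (h.restrict U))) :
    liftcatOp f ι = hDist g h := by
  unfold liftcatOp hDist
  congr 1
  ext N
  refine exists_congr fun n => and_congr_right fun _ => exists_congr fun U => ?_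
  exact ⟨fun ⟨hU, hcov, hlift⟩ => ⟨hU, hcov, fun i => (hfg _ (hU i)).1 (hlift i)⟩,
    fun ⟨hU, hcov, hhom⟩ => ⟨hU, hcov, fun i => (hfg _ (hU i)).2 (hhom i)⟩⟩

variable (Y) in
def freePathFibration : C(C(I, Y), Y × Y) :=
  ⟨fun γ : C(I, Y) => (γ 0, γ 1),
    (ContinuousEvalConst.continuous_eval_const 0).prodMk
      (ContinuousEvalConst.continuous_eval_const 1)⟩

theorem homotopic_iff_exists_freePathFibration_comp_eq {f g : C(X, Y)} :
    f.Homotopic g ↔ ∃ l : C(X, C(I, Y)), (freePathFibration Y).comp l = f.prodMk g := by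
  constructor
  · rintro ⟨H⟩
    refine ⟨(H.toContinuousMap.comp ContinuousMap.prodSwap).curry, ?_⟩
    ext x
    · exact H.apply_zero x
    · exact H.apply_one x
  · rintro ⟨l, hl⟩
    refine ⟨{ toContinuousMap := l.uncurry.comp ContinuousMap.prodSwap
              map_zero_left := fun x => congrArg Prod.fst (DFunLike.congr_fun hl x)
              map_one_left := fun x => congrArg Prod.snd (DFunLike.congr_fun hl x) }⟩

theorem exists_freePathFibration_comp_homotopic_iff (p : C(X, Y × Y)) :
    (∃ l : C(X, C(I, Y)), ((freePathFibration Y).comp l).Homotopic p) ↔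
      (ContinuousMap.fst.comp p).Homotopic (ContinuousMap.snd.comp p) := by
  constructor
  · rintro ⟨l, hl⟩
    have hpath : (ContinuousMap.fst.comp ((freePathFibration Y).comp l)).Homotopic
        (ContinuousMap.snd.comp ((freePathFibration Y).comp l)) :=
      homotopic_iff_exists_freePathFibration_comp_eq.2 ⟨l, rfl⟩
    exact ((ContinuousMap.Homotopic.refl _).comp hl).symm.trans
      (hpath.trans ((ContinuousMap.Homotopic.refl _).comp hl))
  · intro hp
    obtain ⟨l, hl⟩ := homotopic_iff_exists_freePathFibration_comp_eq.1 hp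
    exact ⟨l, hl ▸ ContinuousMap.Homotopic.refl p⟩

end

theorem TCop_eq_hDist_proj (Y : Type*) [TopologicalSpace Y] :
    TCop Y = hDist (⟨Prod.fst, continuous_fst⟩ : C(Y × Y, Y))
      (⟨Prod.snd, continuous_snd⟩ : C(Y × Y, Y)) :=
  liftcatOp_eq_hDist_of_forall_isOpen fun U _ =>
    exists_freePathFibration_comp_homotopic_iff ((ContinuousMap.id (Y × Y)).restrict U)
end

section
/- The pseudocircle S (the four-point space {a₁, a₂, b₁, b₂} with opens ∅, {b₁}, {b₂}, {b₁,b₂}, {b₁,b₂,a₁}, {b₁,b₂,a₂}, S) has Lusternik–Schnirelmann category cat^op(S) = 1: S cannot be covered by a single open set with nullhomotopic inclusion, but it is covered by the two open sets {b₁,b₂,a₁} and {b₁,b₂,a₂}, each of whose inclusions into S is nullhomotopic. -/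
/-- The pseudocircle: four points `a₁, a₂, b₁, b₂`. -/
inductive PC : Type
  | a1 | a2 | b1 | b2

/-- The pseudocircle topology, generated by the opens
`{b₁}`, `{b₂}`, `{b₁,b₂,a₁}`, `{b₁,b₂,a₂}` (its open sets are exactly
`∅`, `{b₁}`, `{b₂}`, `{b₁,b₂}`, `{b₁,b₂,a₁}`, `{b₁,b₂,a₂}` and the whole space). -/
instance : TopologicalSpace PC :=
  TopologicalSpace.generateFrom
    {{PC.b1}, {PC.b2}, {PC.b1, PC.b2, PC.a1}, {PC.b1, PC.b2, PC.a2}}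

/-!
In a finite space a homotopy `F` can only move each `F t` to maps comparable with it in the
specialization order, since `F s x ⤳ F t x` for all `s` near `t`. The identity of the
pseudocircle is comparable with no other continuous self-map (the poset `b₁, b₂ < a₁, a₂` is
rigid), so `t ↦ (F t = id)` is locally constant on `[0, 1]` and the identity is not
nullhomotopic. On the other hand each of `{b₁, b₂, aᵢ}` specializes to `aᵢ`, and the homotopy
that jumps to `aᵢ` at time `1` is continuous.
-/

open Topology Filter unitInterval

theorem TopologicalSpace.specializes_generateFrom_iff {α : Type*} {g : Set (Set α)} {x y : α} :
    @Specializes α (generateFrom g) x y ↔ ∀ s ∈ g, y ∈ s → x ∈ s := by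
  let _ := generateFrom g
  simp [specializes_iff_pure, nhds_generateFrom, imp.swap (a := y ∈ _)]

theorem eventually_specializes_nhds {X : Type*} [TopologicalSpace X] [AlexandrovDiscrete X]
    (x : X) : ∀ᶠ y in 𝓝 x, y ⤳ x := by
  rw [← principal_nhdsKer_singleton]
  exact fun _ => mem_nhdsKer_singleton.1

theorem eventually_forall_specializes {T X Y : Type*} [TopologicalSpace T] [TopologicalSpace Y]
    [Finite X] [AlexandrovDiscrete Y] {F : T → X → Y}
    (hF : ∀ x, Continuous (F · x)) (t : T) : ∀ᶠ s in 𝓝 t, ∀ x, F s x ⤳ F t x :=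
  eventually_all.2 fun x => (hF x).continuousAt.eventually (eventually_specializes_nhds _)

namespace ContinuousMap

variable {X Y : Type*} [TopologicalSpace X] [TopologicalSpace Y]

theorem Homotopic.of_specializes {f g : C(X, Y)} (h : ∀ x, f x ⤳ g x) : f.Homotopic g := by
  classical
  exact ⟨{ toFun := {p : I × X | p.1 = 1}.piecewise (fun p => g p.2) (fun p => f p.2)
           continuous_toFun :=
             (isClosed_eq continuous_fst continuous_const).continuous_piecewise_of_specializes
               (by fun_prop) (by fun_prop) fun p => h p.2
           map_zero_left := fun x => by simp
           map_one_left := fun x => by simp }⟩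

theorem Homotopic.restrict_id_const_of_specializes {U : Set X} {a : X} (hU : ∀ x ∈ U, x ⤳ a) :
    ((ContinuousMap.id X).restrict U).Homotopic (const U a) :=
  .of_specializes fun x => hU x x.2

theorem Homotopic.eq_of_rigid [Finite X] [AlexandrovDiscrete Y] {f₀ f₁ : C(X, Y)}
    (h : f₀.Homotopic f₁) (hle : ∀ g : C(X, Y), (∀ x, g x ⤳ f₀ x) → g = f₀)
    (hge : ∀ g : C(X, Y), (∀ x, f₀ x ⤳ g x) → g = f₀) : f₁ = f₀ := by
  obtain ⟨F⟩ := h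
  have hF : IsLocallyConstant fun t => F.curry t = f₀ := by
    refine (IsLocallyConstant.iff_eventually_eq _).2 fun t => ?_
    filter_upwards [eventually_forall_specializes (F := fun s x => F.curry s x)
      (fun x => by fun_prop) t] with s hs
    refine propext ⟨fun hs₀ => hge _ fun x => ?_, fun ht₀ => hle _ fun x => ?_⟩
    · simpa [hs₀] using hs x
    · simpa [ht₀] using hs x
  simpa using hF.apply_eq_of_preconnectedSpace 0 1

theorem Homotopic.of_restrict {f g : C(X, Y)} {U : Set X} (hU : ∀ x, x ∈ U)
    (h : (f.restrict U).Homotopic (g.restrict U)) : f.Homotopic g :=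
  ⟨h.some.compContinuousMap ⟨fun x => ⟨x, hU x⟩, by fun_prop⟩⟩

end ContinuousMap

namespace PC

instance : Finite PC :=
  Finite.of_surjective ![a1, a2, b1, b2] fun x => by
    cases x
    exacts [⟨0, rfl⟩, ⟨1, rfl⟩, ⟨2, rfl⟩, ⟨3, rfl⟩]

theorem specializes_iff {x y : PC} : x ⤳ y ↔ x = y ∨ (x = b1 ∨ x = b2) ∧ (y = a1 ∨ y = a2) := by
  rw [instTopologicalSpacePC, TopologicalSpace.specializes_generateFrom_iff]
  cases x <;> cases y <;> simp

theorem eq_id_of_forall_specializes_self {g : C(PC, PC)} (h : ∀ x, g x ⤳ x) :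
    g = ContinuousMap.id PC := by
  have hb1 : g b1 = b1 := by simpa [specializes_iff] using h b1
  have hb2 : g b2 = b2 := by simpa [specializes_iff] using h b2
  have ha (a : PC) (ha : a = a1 ∨ a = a2) : g a = a := by
    have k1 : b1 ⤳ g a := hb1 ▸ (specializes_iff.2 (.inr ⟨.inl rfl, ha⟩)).map g.continuous
    have k2 : b2 ⤳ g a := hb2 ▸ (specializes_iff.2 (.inr ⟨.inr rfl, ha⟩)).map g.continuous
    have k := h a
    rcases ha with rfl | rfl <;> cases hv : g _ <;> simp_all [specializes_iff]
  ext x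
  cases x
  exacts [ha a1 (.inl rfl), ha a2 (.inr rfl), hb1, hb2]

theorem eq_id_of_forall_self_specializes {g : C(PC, PC)} (h : ∀ x, x ⤳ g x) :
    g = ContinuousMap.id PC := by
  have ha1 : g a1 = a1 := by simpa [specializes_iff, eq_comm] using h a1
  have ha2 : g a2 = a2 := by simpa [specializes_iff, eq_comm] using h a2
  have hb (b : PC) (hb : b = b1 ∨ b = b2) : g b = b := by
    have k1 : g b ⤳ a1 := ha1 ▸ (specializes_iff.2 (.inr ⟨hb, .inl rfl⟩)).map g.continuous
    have k2 : g b ⤳ a2 := ha2 ▸ (specializes_iff.2 (.inr ⟨hb, .inr rfl⟩)).map g.continuous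
    have k := h b
    rcases hb with rfl | rfl <;> cases hv : g _ <;> simp_all [specializes_iff]
  ext x
  cases x
  exacts [ha1, ha2, hb b1 (.inl rfl), hb b2 (.inr rfl)]

theorem not_homotopic_id_const (x₀ : PC) :
    ¬(ContinuousMap.id PC).Homotopic (ContinuousMap.const PC x₀) := fun h => by
  have h₀ := h.eq_of_rigid (fun _ => eq_id_of_forall_specializes_self)
    (fun _ => eq_id_of_forall_self_specializes)
  exact noConfusion ((DFunLike.congr_fun h₀ b1).symm.trans (DFunLike.congr_fun h₀ b2))

end PC

theorem catLS_pseudocircle : catLS PC = 1 := by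
  refine le_antisymm
    (sInf_le ⟨1, rfl, ![{PC.b1, PC.b2, PC.a1}, {PC.b1, PC.b2, PC.a2}], ?_, ?_, ?_⟩) (le_sInf ?_)
  · intro i
    fin_cases i <;> exact TopologicalSpace.isOpen_generateFrom_of_mem (by simp)
  · intro x
    cases x
    exacts [⟨0, by simp⟩, ⟨1, by simp⟩, ⟨0, by simp⟩, ⟨0, by simp⟩]
  · intro i
    fin_cases i
    exacts [⟨PC.a1, .restrict_id_const_of_specializes (by simp [PC.specializes_iff])⟩,
      ⟨PC.a2, .restrict_id_const_of_specializes (by simp [PC.specializes_iff])⟩]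
  · rintro _ ⟨n, rfl, U, -, hcover, hnull⟩
    obtain rfl | hn := eq_or_ne n 0
    · obtain ⟨x₀, h⟩ := hnull 0
      have hU : ∀ x, x ∈ U 0 := fun x => by simpa [Fin.eq_zero] using hcover x
      exact (PC.not_homotopic_id_const x₀ (.of_restrict (g := .const PC x₀) hU h)).elim
    · exact_mod_cast Nat.one_le_iff_ne_zero.2 hn
end
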